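/- arXiv:0707.3339 — 3 statements merged into one kernel-verified Lean document; each statement's English description precedes it below -/
import Mathlib

section
/- Let f be a real transcendental entire function such that f and f″ + f each have only finitely many non-real zeros, and let L = f′/f, T(z) = tan z, and F = (T·L − 1)/(L + T). Then for every subset X ⊆ ℂ ∖ ℝ, the number of zeros of F′ in X, counted with multiplicity, is at most the number of distinct zeros of f in X plus the number of zeros of f″ + f in X counted with multiplicity; in particular, F′ has only finitely many non-real zeros. -/
open Complex Set Filter MeasureTheory Topology
open scoped ENNReal

noncomputable section

/-- The open upper half-plane, as a subset of `ℂ`. -/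
def UHP : Set ℂ := {z : ℂ | 0 < z.im}

/-- A real entire function: entire, mapping `ℝ` into `ℝ`. -/
def RealEntire (f : ℂ → ℂ) : Prop :=
  Differentiable ℂ f ∧ ∀ x : ℝ, (f (x : ℂ)).im = 0

/-- A function is transcendental if it is not a polynomial. -/
def TranscendentalFun (f : ℂ → ℂ) : Prop :=
  ¬ ∃ p : Polynomial ℂ, ∀ z : ℂ, f z = p.eval z

/-- The maximum modulus `M(r, f)`. -/
def maxMod (f : ℂ → ℂ) (r : ℝ) : ℝ :=
  sSup ((fun z => ‖f z‖) '' Metric.sphere (0 : ℂ) r)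

/-- `f` has infinite order: `limsup (log log M(r,f)) / log r = ∞`. -/
def InfiniteOrder (f : ℂ → ℂ) : Prop :=
  ∀ c r₀ : ℝ, ∃ r : ℝ, r₀ ≤ r ∧ c * Real.log r < Real.log (Real.log (maxMod f r))

/-- `f` has only finitely many non-real zeros. -/
def FinitelyManyNonRealZeros (f : ℂ → ℂ) : Prop :=
  {z : ℂ | z.im ≠ 0 ∧ f z = 0}.Finite

open Classical in
/-- The order of a meromorphic function at a point (junk value `0` if not meromorphic there). -/
def merOrder (g : ℂ → ℂ) (z : ℂ) : WithTop ℤ :=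
  if h : MeromorphicAt g z then meromorphicOrderAt g z else 0

/-- Multiplicity of `z` as a zero of `g` (0 if not a zero). -/
def zeroMult (g : ℂ → ℂ) (z : ℂ) : ℕ := ((merOrder g z).untopD 0).toNat

/-- Multiplicity of `z` as a pole of `g` (0 if not a pole). -/
def poleMult (g : ℂ → ℂ) (z : ℂ) : ℕ := (-((merOrder g z).untopD 0)).toNat

/-- `g` has a pole at `z`. -/
def IsPoleAt (g : ℂ → ℂ) (z : ℂ) : Prop := MeromorphicAt g z ∧ merOrder g z < 0

/-- The Weierstrass primary factor `E_q(w)`. -/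
def weierstrassE (q : ℕ) (w : ℂ) : ℂ :=
  (1 - w) * Complex.exp (∑ k ∈ Finset.range q, w ^ (k + 1) / ((k : ℂ) + 1))

/-- A real entire function with only real zeros, of genus at most `2p+1`,
written in Hadamard product form. -/
def GenusForm (p : ℕ) (g : ℂ → ℂ) : Prop :=
  ∃ (c : ℝ) (μ : ℕ) (Q : Polynomial ℝ) (q : ℕ) (ι : Type) (a : ι → ℝ),
    Countable ι ∧ c ≠ 0 ∧ Q.natDegree ≤ 2 * p + 1 ∧ q ≤ 2 * p + 1 ∧
    (∀ i, a i ≠ 0) ∧ Summable (fun i => |a i| ^ (-((q : ℝ) + 1))) ∧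
    ∀ z : ℂ, g z = (c : ℂ) * z ^ μ * Complex.exp ((Q.map (algebraMap ℝ ℂ)).eval z) *
      ∏' i, weierstrassE q (z / (a i : ℂ))

/-- The class `V_{2p}`. -/
def VClass (p : ℕ) : Set (ℂ → ℂ) :=
  {f | ∃ (a : ℝ) (g : ℂ → ℂ), 0 ≤ a ∧ Differentiable ℂ g ∧ GenusForm p g ∧
    ∀ z : ℂ, f z = g z * Complex.exp (-(a : ℂ) * z ^ (2 * p + 2))}

/-- The class `U_{2p}`: `U_0 = V_0`, `U_{2p} = V_{2p} \ V_{2p-2}` for `p ≥ 1`. -/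
def UClass (p : ℕ) : Set (ℂ → ℂ) :=
  if p = 0 then VClass 0 else VClass p \ VClass (p - 1)

/-- The class `U_{2p}^*`: functions `f = P·h` with `h ∈ U_{2p}` and `P` a real
polynomial without real zeros. -/
def UStarClass (p : ℕ) : Set (ℂ → ℂ) :=
  {f | ∃ (P : Polynomial ℝ) (h : ℂ → ℂ), (∀ x : ℝ, P.eval x ≠ 0) ∧ h ∈ UClass p ∧
    ∀ z : ℂ, f z = (P.map (algebraMap ℝ ℂ)).eval z * h z}

/-- Positive part of the logarithm. -/
def posLog (x : ℝ) : ℝ := max (Real.log x) 0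

/-- `𝔫(t, g)`: number of poles of `g`, with multiplicity, in `{z : |z - it/2| ≤ t/2, |z| ≥ 1}`. -/
def tsujiSmalln (g : ℂ → ℂ) (t : ℝ) : ℝ :=
  ∑' z : {z : ℂ | ‖z - Complex.I * (t / 2)‖ ≤ t / 2 ∧ 1 ≤ ‖z‖},
    (poleMult g z : ℝ)

/-- `𝔑(r, g)`. -/
def tsujiBigN (g : ℂ → ℂ) (r : ℝ) : ℝ :=
  ∫ t in (1 : ℝ)..r, tsujiSmalln g t / t ^ 2

/-- `𝔪(r, g)`. -/
def tsujiM (g : ℂ → ℂ) (r : ℝ) : ℝ :=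
  (2 * Real.pi)⁻¹ * ∫ θ in Real.arcsin (1 / r)..(Real.pi - Real.arcsin (1 / r)),
    posLog ‖g ((r * Real.sin θ : ℝ) * Complex.exp (θ * Complex.I))‖ /
      (r * Real.sin θ ^ 2)

/-- The Tsuji characteristic `𝔗(r, g) = 𝔪(r, g) + 𝔑(r, g)`. -/
def tsujiT (g : ℂ → ℂ) (r : ℝ) : ℝ := tsujiM g r + tsujiBigN g r

/-- `𝔗(r, g) = O(log r)` as `r → ∞`. -/
def TsujiLogBounded (g : ℂ → ℂ) : Prop :=
  ∃ C r₀ : ℝ, ∀ r : ℝ, r₀ ≤ r → tsujiT g r ≤ C * Real.log r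

/-- `g` has at least `n` zeros, counted with multiplicity, in the set `S`. -/
def ZerosAtLeast (g : ℂ → ℂ) (S : Set ℂ) (n : ℕ) : Prop :=
  ∃ (zs : Finset ℂ) (m : ℂ → ℕ),
    (↑zs : Set ℂ) ⊆ S ∧
    (∀ z ∈ zs, 1 ≤ m z ∧ ∀ k < m z, iteratedDeriv k g z = 0) ∧
    n ≤ ∑ z ∈ zs, m z

/-- The logarithmic derivative `L = f'/f`. -/
def Lfun (f : ℂ → ℂ) : ℂ → ℂ := fun z => deriv f z / f z

/-- The auxiliary function `F = (T·L − 1)/(L + T)`, `T = tan`. -/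
def Ffun (f : ℂ → ℂ) : ℂ → ℂ := fun z =>
  (Complex.tan z * Lfun f z - 1) / (Lfun f z + Complex.tan z)

/-- The auxiliary function `s_a = T·(F − a)/(T − F)`. -/
def sfun (f : ℂ → ℂ) (a : ℂ) : ℂ → ℂ := fun z =>
  Complex.tan z * (Ffun f z - a) / (Complex.tan z - Ffun f z)


/-! Write `F = P / Q` with the entire functions `P = sin·f' − cos·f` and `Q = cos·f' + sin·f`.
Then `P' = sin·(f'' + f)` and `Q' = cos·(f'' + f)`, so `F' = (f'' + f)·f / Q²`. Off the real axis
`cos ≠ 0`, hence `ord F' = ord (f'' + f) + ord f − 2·ord Q`, and `ord Q ≥ ord f − 1` because `Q`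
only involves `f` and `f'`. Thus `ord f − 2·ord Q` is at most `1`, and at most `0` where
`f(z) ≠ 0`. All these orders are finite: `f` and `f'' + f` have non-real non-zeros, and there
`Q' = cos·(f'' + f)` does not vanish. -/

section AnalyticOrder

variable {𝕜 E : Type*} [NontriviallyNormedField 𝕜] [NormedAddCommGroup E] [NormedSpace 𝕜 E]

lemma analyticOrderAt_ne_top_of_deriv_ne_zero {g : 𝕜 → E} {w : 𝕜} (hw : deriv g w ≠ 0) :
    analyticOrderAt g w ≠ ⊤ := fun htop =>
  hw (by simpa using Filter.EventuallyEq.deriv_eq (analyticOrderAt_eq_top.1 htop))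

lemma AnalyticAt.eventually_ne_zero_of_analyticOrderAt_ne_top {g : 𝕜 → E} {z : 𝕜}
    (hg : AnalyticAt 𝕜 g z) (hz : analyticOrderAt g z ≠ ⊤) : ∀ᶠ w in 𝓝[≠] z, g w ≠ 0 :=
  (meromorphicOrderAt_ne_top_iff_eventually_ne_zero hg.meromorphicAt).1 (by
    simpa [hg.meromorphicOrderAt_eq] using hz)

end AnalyticOrder

lemma Differentiable.analyticOrderAt_ne_top {g : ℂ → ℂ} (hg : Differentiable ℂ g) {w : ℂ}
    (hw : analyticOrderAt g w ≠ ⊤) (z : ℂ) : analyticOrderAt g z ≠ ⊤ :=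
  AnalyticOnNhd.analyticOrderAt_ne_top_of_isPreconnected (fun x _ => hg.analyticAt x)
    isPreconnected_univ (mem_univ w) (mem_univ z) hw

lemma Differentiable.analyticOrderAt_ne_top_of_ne_zero {g : ℂ → ℂ} (hg : Differentiable ℂ g)
    {w : ℂ} (hw : g w ≠ 0) (z : ℂ) : analyticOrderAt g z ≠ ⊤ :=
  hg.analyticOrderAt_ne_top ((analyticOrderAt_eq_zero.2 (Or.inr hw)).trans_ne ENat.zero_ne_top) z

lemma zeroMult_of_meromorphicOrderAt_eq {g : ℂ → ℂ} {z : ℂ} {n : ℤ}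
    (h : meromorphicOrderAt g z = n) : zeroMult g z = n.toNat := by
  by_cases hg : MeromorphicAt g z
  · simp [zeroMult, merOrder, hg, h]
  · rw [meromorphicOrderAt_of_not_meromorphicAt hg] at h
    simp [zeroMult, merOrder, hg, ← WithTop.coe_eq_coe.1 h]

lemma AnalyticAt.zeroMult_eq {g : ℂ → ℂ} {z : ℂ} (hg : AnalyticAt ℂ g z) :
    zeroMult g z = (analyticOrderAt g z).toNat := by
  cases h : analyticOrderAt g z with
  | top => simp [zeroMult, merOrder, hg.meromorphicAt, hg.meromorphicOrderAt_eq, h]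
  | coe n =>
    simpa using zeroMult_of_meromorphicOrderAt_eq (n := n) (by simp [hg.meromorphicOrderAt_eq, h])

lemma AnalyticAt.zeroMult_eq_zero {g : ℂ → ℂ} {z : ℂ} (hg : AnalyticAt ℂ g z)
    (hz : g z ≠ 0) : zeroMult g z = 0 := by
  simp [hg.zeroMult_eq, analyticOrderAt_eq_zero.2 (Or.inr hz)]

lemma cos_ne_zero_of_im_ne_zero {z : ℂ} (hz : z.im ≠ 0) : cos z ≠ 0 := by
  intro h
  obtain ⟨k, rfl⟩ := cos_eq_zero_iff.mp h
  apply hz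
  norm_cast

lemma FinitelyManyNonRealZeros.exists_im_ne_zero_and_ne_zero {g : ℂ → ℂ}
    (hg : FinitelyManyNonRealZeros g) : ∃ w : ℂ, w.im ≠ 0 ∧ g w ≠ 0 := by
  by_contra! h
  have hI : {w : ℂ | w.im ≠ 0} ∈ 𝓝 I :=
    (isOpen_ne_fun continuous_im continuous_const).mem_nhds (by simp)
  exact infinite_of_mem_nhds I hI (hg.subset fun w hw => ⟨hw, h w hw⟩)

/-- Multiplying numerator and denominator of `F = (T·f'/f − 1)/(f'/f + T)` by `f · cos` writes
`F` as the quotient `FfunNum f / FfunDen f` of two entire functions. -/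
def FfunNum (f : ℂ → ℂ) (w : ℂ) : ℂ := sin w * deriv f w - cos w * f w

def FfunDen (f : ℂ → ℂ) (w : ℂ) : ℂ := cos w * deriv f w + sin w * f w

lemma Ffun_eq_div {f : ℂ → ℂ} {w : ℂ} (hc : cos w ≠ 0) (hf : f w ≠ 0) :
    Ffun f w = FfunNum f w / FfunDen f w := by
  have hnum : tan w * Lfun f w - 1 = FfunNum f w / (f w * cos w) := by
    rw [Lfun, FfunNum, tan_eq_sin_div_cos]
    field_simp
  have hden : Lfun f w + tan w = FfunDen f w / (f w * cos w) := by
    rw [Lfun, FfunDen, tan_eq_sin_div_cos]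
    field_simp
  rw [Ffun, hnum, hden, div_div_div_cancel_right₀ (mul_ne_zero hf hc)]

section Entire

variable {f : ℂ → ℂ}

lemma hasDerivAt_FfunNum (hf : Differentiable ℂ f) (w : ℂ) :
    HasDerivAt (FfunNum f) (sin w * (deriv (deriv f) w + f w)) w := by
  refine (((hasDerivAt_sin w).mul (hf.deriv w).hasDerivAt).sub
    ((hasDerivAt_cos w).mul (hf w).hasDerivAt)).congr_deriv ?_
  ring

lemma hasDerivAt_FfunDen (hf : Differentiable ℂ f) (w : ℂ) :
    HasDerivAt (FfunDen f) (cos w * (deriv (deriv f) w + f w)) w := by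
  refine (((hasDerivAt_cos w).mul (hf.deriv w).hasDerivAt).add
    ((hasDerivAt_sin w).mul (hf w).hasDerivAt)).congr_deriv ?_
  ring

lemma differentiable_FfunDen (hf : Differentiable ℂ f) : Differentiable ℂ (FfunDen f) :=
  fun w => (hasDerivAt_FfunDen hf w).differentiableAt

lemma hasDerivAt_Ffun (hf : Differentiable ℂ f) {w : ℂ} (hc : cos w ≠ 0) (hfw : f w ≠ 0)
    (hQ : FfunDen f w ≠ 0) :
    HasDerivAt (Ffun f) ((deriv (deriv f) w + f w) * f w / FfunDen f w ^ 2) w := by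
  have hF : FfunNum f / FfunDen f =ᶠ[𝓝 w] Ffun f := by
    filter_upwards [continuous_cos.continuousAt.eventually_ne hc,
      hf.continuous.continuousAt.eventually_ne hfw] with v hcv hfv
    exact (Ffun_eq_div hcv hfv).symm
  refine (((hasDerivAt_FfunNum hf w).div (hasDerivAt_FfunDen hf w) hQ).congr_of_eventuallyEq
    hF.symm).congr_deriv ?_
  congr 1
  rw [FfunNum, FfunDen]
  linear_combination (deriv (deriv f) w + f w) * f w * sin_sq_add_cos_sq w

lemma analyticOrderAt_le_analyticOrderAt_FfunDen_add_one (hf : Differentiable ℂ f) (z : ℂ) :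
    analyticOrderAt f z ≤ analyticOrderAt (FfunDen f) z + 1 := by
  by_cases hfz : f z = 0
  swap
  · simp [analyticOrderAt_eq_zero.2 (Or.inr hfz)]
  have hord : analyticOrderAt (deriv f) z + 1 = analyticOrderAt f z := by
    simpa [hfz] using (hf.analyticAt z).analyticOrderAt_deriv_add_one
  have hderiv : analyticOrderAt (deriv f) z ≤ analyticOrderAt (FfunDen f) z := calc
    analyticOrderAt (deriv f) z
        ≤ min (analyticOrderAt (cos * deriv f) z) (analyticOrderAt (sin * f) z) := by
      rw [analyticOrderAt_mul analyticAt_cos (hf.deriv.analyticAt z),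
        analyticOrderAt_mul analyticAt_sin (hf.analyticAt z), ← hord]
      exact le_min le_add_self (le_self_add.trans le_add_self)
    _ ≤ analyticOrderAt (FfunDen f) z := le_analyticOrderAt_add
  rw [← hord]
  gcongr

lemma meromorphicOrderAt_deriv_Ffun (hf : Differentiable ℂ f) {z : ℂ} (hc : cos z ≠ 0)
    {m k s : ℕ} (hm : analyticOrderAt f z = m)
    (hk : analyticOrderAt (fun w => deriv (deriv f) w + f w) z = k)
    (hs : analyticOrderAt (FfunDen f) z = s) :
    meromorphicOrderAt (deriv (Ffun f)) z = ((k + m - 2 * s : ℤ) : WithTop ℤ) := by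
  have hfA : AnalyticAt ℂ f z := hf.analyticAt z
  have hgA : AnalyticAt ℂ (fun w => deriv (deriv f) w + f w) z :=
    (hf.deriv.deriv.add hf).analyticAt z
  have hQA : AnalyticAt ℂ (FfunDen f) z := (differentiable_FfunDen hf).analyticAt z
  have hev : deriv (Ffun f) =ᶠ[𝓝[≠] z]
      (fun w => deriv (deriv f) w + f w) * f / FfunDen f ^ 2 := by
    filter_upwards [hfA.eventually_ne_zero_of_analyticOrderAt_ne_top (by simp [hm]),
      hQA.eventually_ne_zero_of_analyticOrderAt_ne_top (by simp [hs]),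
      nhdsWithin_le_nhds (continuous_cos.continuousAt.eventually_ne hc)] with w hfw hQw hcw
    exact (hasDerivAt_Ffun hf hcw hfw hQw).deriv
  rw [meromorphicOrderAt_congr hev,
    meromorphicOrderAt_div (hgA.meromorphicAt.mul hfA.meromorphicAt) (hQA.meromorphicAt.pow 2),
    meromorphicOrderAt_mul hgA.meromorphicAt hfA.meromorphicAt,
    meromorphicOrderAt_pow hQA.meromorphicAt, hgA.meromorphicOrderAt_eq,
    hfA.meromorphicOrderAt_eq, hQA.meromorphicOrderAt_eq, hk, hm, hs]
  simp [ENat.map_natCast]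

theorem zeroMult_deriv_Ffun_le (hf : Differentiable ℂ f) {z : ℂ} (hc : cos z ≠ 0)
    (hfz : analyticOrderAt f z ≠ ⊤)
    (hgz : analyticOrderAt (fun w => deriv (deriv f) w + f w) z ≠ ⊤)
    (hQz : analyticOrderAt (FfunDen f) z ≠ ⊤) :
    zeroMult (deriv (Ffun f)) z ≤
      (if f z = 0 then 1 else 0) + zeroMult (fun w => deriv (deriv f) w + f w) z := by
  obtain ⟨m, hm⟩ := ENat.ne_top_iff_exists.1 hfz
  obtain ⟨k, hk⟩ := ENat.ne_top_iff_exists.1 hgz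
  obtain ⟨s, hs⟩ := ENat.ne_top_iff_exists.1 hQz
  have hms : m ≤ s + 1 := by
    exact_mod_cast hm ▸ hs ▸ analyticOrderAt_le_analyticOrderAt_FfunDen_add_one hf z
  have hfz0 : f z = 0 ↔ m ≠ 0 := by
    rw [← not_iff_not, not_not, ← Nat.cast_inj (R := ℕ∞), hm]
    simp [analyticOrderAt_eq_zero, hf.analyticAt z]
  have hgA : AnalyticAt ℂ (fun w => deriv (deriv f) w + f w) z :=
    (hf.deriv.deriv.add hf).analyticAt z
  rw [zeroMult_of_meromorphicOrderAt_eq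
      (meromorphicOrderAt_deriv_Ffun hf hc hm.symm hk.symm hs.symm),
    hgA.zeroMult_eq, ← hk, ENat.toNat_natCast]
  split_ifs with h0 <;> rw [hfz0] at h0 <;> omega

theorem zeroMult_deriv_Ffun_le_of_im_ne_zero (hf : Differentiable ℂ f) {w₁ : ℂ}
    (hfw₁ : f w₁ ≠ 0) {w₂ : ℂ} (hw₂ : w₂.im ≠ 0) (hgw₂ : deriv (deriv f) w₂ + f w₂ ≠ 0)
    {z : ℂ} (hz : z.im ≠ 0) :
    zeroMult (deriv (Ffun f)) z ≤
      (if f z = 0 then 1 else 0) + zeroMult (fun w => deriv (deriv f) w + f w) z := by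
  have hg : Differentiable ℂ fun w => deriv (deriv f) w + f w := hf.deriv.deriv.add hf
  have hQw₂ : deriv (FfunDen f) w₂ ≠ 0 := by
    rw [(hasDerivAt_FfunDen hf w₂).deriv]
    exact mul_ne_zero (cos_ne_zero_of_im_ne_zero hw₂) hgw₂
  exact zeroMult_deriv_Ffun_le hf (cos_ne_zero_of_im_ne_zero hz)
    (hf.analyticOrderAt_ne_top_of_ne_zero hfw₁ z) (hg.analyticOrderAt_ne_top_of_ne_zero hgw₂ z)
    ((differentiable_FfunDen hf).analyticOrderAt_ne_top
      (analyticOrderAt_ne_top_of_deriv_ne_zero hQw₂) z)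

end Entire

theorem stmt12_general (f : ℂ → ℂ) (hre : RealEntire f)
    (hz1 : FinitelyManyNonRealZeros f)
    (hz2 : FinitelyManyNonRealZeros (fun z => deriv (deriv f) z + f z)) :
    (∀ X : Set ℂ, X ⊆ {z : ℂ | z.im ≠ 0} →
      (∑' z : X, (zeroMult (deriv (Ffun f)) z : ℝ≥0∞)) ≤
        (∑' z : X, (if f z = 0 then 1 else 0 : ℝ≥0∞)) +
        ∑' z : X, (zeroMult (fun w => deriv (deriv f) w + f w) z : ℝ≥0∞)) ∧
    {z : ℂ | z.im ≠ 0 ∧ zeroMult (deriv (Ffun f)) z ≠ 0}.Finite := by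
  have hf : Differentiable ℂ f := hre.1
  obtain ⟨w₁, -, hfw₁⟩ := hz1.exists_im_ne_zero_and_ne_zero
  obtain ⟨w₂, hw₂, hgw₂⟩ := hz2.exists_im_ne_zero_and_ne_zero
  have key (z : ℂ) (hz : z.im ≠ 0) :=
    zeroMult_deriv_Ffun_le_of_im_ne_zero hf hfw₁ hw₂ hgw₂ hz
  refine ⟨fun X hX => ?_, ?_⟩
  · rw [← ENNReal.tsum_add]
    refine ENNReal.tsum_le_tsum fun z => ?_
    have := key z (hX z.2)
    split_ifs at this ⊢ <;> exact_mod_cast this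
  · refine (hz1.union hz2).subset fun z ⟨hz, hF⟩ => ?_
    by_contra hzs
    have hfz : f z ≠ 0 := fun h => hzs (Or.inl ⟨hz, h⟩)
    have hgz : zeroMult (fun w => deriv (deriv f) w + f w) z = 0 :=
      ((hf.deriv.deriv.add hf).analyticAt z).zeroMult_eq_zero fun h => hzs (Or.inr ⟨hz, h⟩)
    have := key z hz
    rw [if_neg hfz, hgz] at this
    exact hF (Nat.le_zero.1 this)

theorem stmt12 (f : ℂ → ℂ) (hre : RealEntire f) (htr : TranscendentalFun f)
    (hz1 : FinitelyManyNonRealZeros f)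
    (hz2 : FinitelyManyNonRealZeros (fun z => deriv (deriv f) z + f z)) :
    (∀ X : Set ℂ, X ⊆ {z : ℂ | z.im ≠ 0} →
      (∑' z : X, (zeroMult (deriv (Ffun f)) z : ℝ≥0∞)) ≤
        (∑' z : X, (if f z = 0 then 1 else 0 : ℝ≥0∞)) +
        ∑' z : X, (zeroMult (fun w => deriv (deriv f) w + f w) z : ℝ≥0∞)) ∧
    {z : ℂ | z.im ≠ 0 ∧ zeroMult (deriv (Ffun f)) z ≠ 0}.Finite :=
  stmt12_general f hre hz1 hz2
end
end

section
/- Let f be a real transcendental entire function, and let L = f′/f, T(z) = tan z, F = (T·L − 1)/(L + T). Then L − i and F − i have exactly the same zeros with the same multiplicities: for every z₀ ∈ ℂ and every integer m ≥ 1, L − i has a zero of multiplicity m at z₀ if and only if F − i has a zero of multiplicity m at z₀. In particular, every such z₀ is non-real. -/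
open Complex Set Filter MeasureTheory Topology
open scoped ENNReal

noncomputable section

/-!
Since `(T·L − 1) − i·(L + T) = (T − i)(L − i)`, away from the zeros of `L + T` we have
`F − i = (T − i)(L − i) / ((L − i) + (T + i))`. As `tan z ≠ ±i`, writing `T ± i = (sin ± i cos)/cos`
shows that `T + i` and `T − i` both have order `−ord cos ≤ 0` at every point. Hence if `L − i` has
a zero of order `m ≥ 1`, then `L + T` has the order of `T + i`, which cancels against `T − i`, so
`F − i` has a zero of order `m`; otherwise the order of `F − i` is `≤ 0` or infinite.
Finally `L = f'/f` is real on `ℝ`, so it cannot tend to `i` at a real point.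
-/

section MeromorphicOrder

variable {𝕜 : Type*} [NontriviallyNormedField 𝕜] {A B C : 𝕜 → 𝕜} {x : 𝕜}

theorem meromorphicOrderAt_mul_div_add_eq_iff (hA : MeromorphicAt A x) (hB : MeromorphicAt B x)
    (hC : MeromorphicAt C x) (hBC : meromorphicOrderAt B x = meromorphicOrderAt C x)
    (hC₀ : meromorphicOrderAt C x ≤ 0) {m : ℤ} (hm : 0 < m) :
    meromorphicOrderAt A x = m ↔ meromorphicOrderAt (C * A / (A + B)) x = m := by
  rw [meromorphicOrderAt_div (hC.mul hA) (hA.add hB), meromorphicOrderAt_mul hC hA]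
  lift meromorphicOrderAt C x to ℤ using (hC₀.trans_lt (WithTop.coe_lt_top 0)).ne with e he
  have he₀ : e ≤ 0 := by exact_mod_cast hC₀
  cases hp : meromorphicOrderAt A x with
  | top => simp
  | coe p =>
    rcases lt_or_ge e p with hep | hpe
    · have hs : meromorphicOrderAt (A + B) x = e := by
        rw [meromorphicOrderAt_add_eq_right_of_lt hA (by rw [hBC, hp]; exact_mod_cast hep), hBC]
      rw [hs]
      norm_cast
      simp
    · have hs : (p : WithTop ℤ) ≤ meromorphicOrderAt (A + B) x := by
        simpa [hp, hBC, hpe] using meromorphicOrderAt_add hA hB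
      cases hq : meromorphicOrderAt (A + B) x with
      | top => simp; omega
      | coe q =>
        have hpq : p ≤ q := by exact_mod_cast hq ▸ hs
        norm_cast
        omega

end MeromorphicOrder

theorem merOrder_eq_meromorphicOrderAt (g : ℂ → ℂ) (z : ℂ) :
    merOrder g z = meromorphicOrderAt g z := by
  unfold merOrder
  split_ifs with h
  · rfl
  · exact (meromorphicOrderAt_of_not_meromorphicAt h).symm

namespace Complex

theorem eventually_cos_ne_zero (z : ℂ) : ∀ᶠ w in 𝓝[≠] z, cos w ≠ 0 := by
  refine (analyticAt_cos (x := z)).eventually_eq_zero_or_eventually_ne_zero.resolve_left ?_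
  intro h
  have hcos := (analyticOnNhd_univ_iff_differentiable.2 differentiable_cos
    ).eqOn_zero_of_preconnected_of_eventuallyEq_zero isPreconnected_univ (mem_univ z) h
    (mem_univ 0)
  simp at hcos

theorem neg_meromorphicOrderAt_cos_nonpos (z : ℂ) : -meromorphicOrderAt cos z ≤ 0 := by
  have hne := (meromorphicOrderAt_ne_top_iff_eventually_ne_zero analyticAt_cos.meromorphicAt).2
    (eventually_cos_ne_zero z)
  have hnonneg := analyticAt_cos.meromorphicOrderAt_nonneg (x := z)
  lift meromorphicOrderAt cos z to ℤ using hne with n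
  exact_mod_cast neg_nonpos.2 (WithTop.coe_nonneg.1 hnonneg)

theorem meromorphicOrderAt_tan_add {c : ℂ} (hc : c ^ 2 = -1) (z : ℂ) :
    meromorphicOrderAt (fun w => tan w + c) z = -meromorphicOrderAt cos z := by
  have hnum : ∀ w, sin w + c * cos w ≠ 0 := by
    intro w h
    have h1 := sin_sq_add_cos_sq w
    rw [eq_neg_of_add_eq_zero_left h] at h1
    exact zero_ne_one (α := ℂ) (by linear_combination h1 - cos w ^ 2 * hc)
  rw [← meromorphicOrderAt_inv, ← meromorphicOrderAt_mul_of_ne_zero (f := cos⁻¹)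
    (g := fun w => sin w + c * cos w) (by fun_prop) (hnum z)]
  refine meromorphicOrderAt_congr ?_
  filter_upwards [eventually_cos_ne_zero z] with w hw
  simp only [Pi.mul_apply, Pi.inv_apply, tan_eq_sin_div_cos]
  field_simp

end Complex

section LogDerivative

variable {f : ℂ → ℂ}

theorem meromorphicAt_Lfun (hf : Differentiable ℂ f) (z : ℂ) : MeromorphicAt (Lfun f) z :=
  (hf.analyticAt z).deriv.meromorphicAt.div (hf.analyticAt z).meromorphicAt

theorem Ffun_sub_I_eq {z : ℂ} (hz : Lfun f z + tan z ≠ 0) :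
    Ffun f z - I = (tan z - I) * (Lfun f z - I) / ((Lfun f z - I) + (tan z + I)) := by
  rw [show Lfun f z - I + (tan z + I) = Lfun f z + tan z by ring, Ffun]
  field_simp
  linear_combination -I_sq

theorem meromorphicOrderAt_Lfun_sub_I_eq_iff_Ffun_sub_I (hf : Differentiable ℂ f) (z₀ : ℂ) {m : ℤ}
    (hm : 0 < m) :
    meromorphicOrderAt (fun z => Lfun f z - I) z₀ = m ↔
      meromorphicOrderAt (fun z => Ffun f z - I) z₀ = m := by
  have hL := meromorphicAt_Lfun hf z₀
  have hT := meromorphicAt_tan z₀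
  have hTI : meromorphicOrderAt (fun z => tan z + I) z₀ = -meromorphicOrderAt cos z₀ :=
    meromorphicOrderAt_tan_add (by simp) z₀
  have hTI' : meromorphicOrderAt (fun z => tan z + -I) z₀ = -meromorphicOrderAt cos z₀ :=
    meromorphicOrderAt_tan_add (by simp) z₀
  have hcos := neg_meromorphicOrderAt_cos_nonpos z₀
  by_cases hdeg : meromorphicOrderAt (fun z => Lfun f z + tan z) z₀ = ⊤
  · -- `L = -T` near `z₀` (e.g. for `f = cos`); then `F - i = -i` since `x / 0 = 0`.
    have hLT := meromorphicOrderAt_eq_top_iff.1 hdeg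
    have hA : meromorphicOrderAt (fun z => Lfun f z - I) z₀ = -meromorphicOrderAt cos z₀ := by
      rw [← hTI, meromorphicOrderAt_fun_neg (f := fun z => tan z + I)]
      refine meromorphicOrderAt_congr ?_
      filter_upwards [hLT] with z hz
      linear_combination hz
    have hF : meromorphicOrderAt (fun z => Ffun f z - I) z₀ = 0 := by
      rw [meromorphicOrderAt_congr (f₂ := fun _ => -I), meromorphicOrderAt_const]
      · simp
      · filter_upwards [hLT] with z hz
        simp [Ffun, hz]
    rw [hA, hF]
    constructor <;> intro h
    · exact absurd (h ▸ hcos) (by exact_mod_cast hm.not_ge)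
    · exact absurd (WithTop.coe_injective h) hm.ne
  · have hne := (meromorphicOrderAt_ne_top_iff_eventually_ne_zero (hL.add hT)).1 hdeg
    rw [meromorphicOrderAt_congr (f₁ := fun z => Ffun f z - I)
      (f₂ := (fun z => tan z + -I) * (fun z => Lfun f z - I) /
        ((fun z => Lfun f z - I) + fun z => tan z + I))]
    · exact meromorphicOrderAt_mul_div_add_eq_iff (hL.sub (.const I z₀)) (hT.add (.const I z₀))
        (hT.add (.const (-I) z₀)) (hTI.trans hTI'.symm) (hTI' ▸ hcos) hm
    · filter_upwards [hne] with z hz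
      rw [Ffun_sub_I_eq hz, sub_eq_add_neg]
      rfl

end LogDerivative

namespace RealEntire

variable {f : ℂ → ℂ}

theorem im_deriv_ofReal (hf : RealEntire f) (x : ℝ) : (deriv f x).im = 0 := by
  have h := (((hf.1 x).hasDerivAt).const_mul (-I)).real_of_complex
  have hzero : (fun y : ℝ => (-I * f y).re) = fun _ => 0 := by
    funext y
    simp [hf.2 y]
  rw [hzero] at h
  simpa using h.unique (hasDerivAt_const x 0)

theorem im_Lfun_ofReal (hf : RealEntire f) (x : ℝ) : (Lfun f x).im = 0 := by
  simp [Lfun, div_im, hf.2 x, hf.im_deriv_ofReal x]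

theorem im_ne_zero_of_meromorphicOrderAt_Lfun_sub_I_pos (hf : RealEntire f) {z₀ : ℂ}
    (h : 0 < meromorphicOrderAt (fun z => Lfun f z - I) z₀) : z₀.im ≠ 0 := by
  intro him
  have hz₀ : z₀ = (z₀.re : ℂ) := ext rfl (by simp [him])
  have hreal : Tendsto ((↑) : ℝ → ℂ) (𝓝[≠] z₀.re) (𝓝[≠] z₀) := by
    rw [hz₀]
    exact continuous_ofReal.continuousWithinAt.tendsto_nhdsWithin fun y hy => by simpa using hy
  have him_lim := (continuous_im.tendsto 0).comp
    ((tendsto_zero_of_meromorphicOrderAt_pos h).comp hreal)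
  have him_const : (im ∘ (fun z => Lfun f z - I) ∘ ((↑) : ℝ → ℂ)) = fun _ => -1 := by
    funext y
    simp [hf.im_Lfun_ofReal y]
  rw [him_const] at him_lim
  simpa using tendsto_nhds_unique tendsto_const_nhds him_lim

end RealEntire

theorem stmt14_general (f : ℂ → ℂ) (hre : RealEntire f) :
    ∀ (z₀ : ℂ) (m : ℕ), 1 ≤ m →
      ((merOrder (fun z => Lfun f z - Complex.I) z₀ = ((m : ℤ) : WithTop ℤ)) ↔
        (merOrder (fun z => Ffun f z - Complex.I) z₀ = ((m : ℤ) : WithTop ℤ))) ∧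
      (merOrder (fun z => Lfun f z - Complex.I) z₀ = ((m : ℤ) : WithTop ℤ) → z₀.im ≠ 0) := by
  intro z₀ m hm
  have hm' : (0 : ℤ) < m := by exact_mod_cast hm
  simp only [merOrder_eq_meromorphicOrderAt]
  refine ⟨meromorphicOrderAt_Lfun_sub_I_eq_iff_Ffun_sub_I hre.1 z₀ hm', fun h => ?_⟩
  exact hre.im_ne_zero_of_meromorphicOrderAt_Lfun_sub_I_pos (h ▸ by exact_mod_cast hm')

theorem stmt14 (f : ℂ → ℂ) (hre : RealEntire f) (htr : TranscendentalFun f) :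
    ∀ (z₀ : ℂ) (m : ℕ), 1 ≤ m →
      ((merOrder (fun z => Lfun f z - Complex.I) z₀ = ((m : ℤ) : WithTop ℤ)) ↔
        (merOrder (fun z => Ffun f z - Complex.I) z₀ = ((m : ℤ) : WithTop ℤ))) ∧
      (merOrder (fun z => Lfun f z - Complex.I) z₀ = ((m : ℤ) : WithTop ℤ) → z₀.im ≠ 0) :=
  stmt14_general f hre

end
end

section
/- Let f be a real transcendental entire function, L = f′/f, T(z) = tan z, F = (T·L − 1)/(L + T), and for non-real a let s_a = T·(F − a)/(T − F). Let a and b be distinct non-real complex numbers and let Q > 0. Then there exists η₀ > 0 such that for every z ∈ ℂ at which tan z, cot z, s_a(z) and s_b(z) are all finite and |s_a(z)| + |s_b(z)| ≤ η₀, one has max{|tan z|, |cot z|} ≥ Q. -/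
open Complex Set Filter MeasureTheory Topology
open scoped ENNReal

noncomputable section

/-!
Write `T = tan z`. Since `T² ≠ -1`, the denominator `T - F` of `s_c` never vanishes, and eliminating
`F` between `s_a` and `s_b` gives the identity `T (b - a) = a s_b - b s_a + T (s_a - s_b)`. Hence
`|T| |a - b| ≤ (|a| + |b| + |T|) (|s_a| + |s_b|)`: when `|s_a| + |s_b|` is small, either `|T| ≥ Q`
or `|T|` is small, and then `|cot z| = 1 / |T|` is large.
-/

theorem Complex.tan_sq_ne_neg_one {z : ℂ} (hcos : Complex.cos z ≠ 0) :
    Complex.tan z ^ 2 ≠ -1 := by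
  intro h
  rw [Complex.tan_eq_sin_div_cos, div_pow, div_eq_iff (pow_ne_zero 2 hcos)] at h
  have := Complex.sin_sq_add_cos_sq z
  exact one_ne_zero (by linear_combination h - this)

theorem Complex.norm_cot (z : ℂ) : ‖Complex.cot z‖ = ‖Complex.tan z‖⁻¹ := by
  rw [Complex.cot_eq_cos_div_sin, Complex.tan_eq_sin_div_cos, ← norm_inv, inv_div]

theorem ne_mul_sub_one_div_add {K : Type*} [Field K] {T L : K} (hT : T ^ 2 ≠ -1)
    (hLT : L + T ≠ 0) : T ≠ (T * L - 1) / (L + T) := by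
  rw [ne_eq, eq_div_iff hLT]
  exact fun h => hT (by linear_combination h)

theorem tan_ne_Ffun {f : ℂ → ℂ} {z : ℂ} (hcos : Complex.cos z ≠ 0)
    (hLT : Lfun f z + Complex.tan z ≠ 0) : Complex.tan z ≠ Ffun f z :=
  ne_mul_sub_one_div_add (Complex.tan_sq_ne_neg_one hcos) hLT

section MoebiusIdentity

variable {K : Type*} {T F a b sa sb : K}

theorem mul_sub_eq_of_eq_div [Field K] (hTF : T ≠ F) (hsa : sa = T * (F - a) / (T - F))
    (hsb : sb = T * (F - b) / (T - F)) :
    T * (b - a) = a * sb - b * sa + T * (sa - sb) := by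
  have : T - F ≠ 0 := sub_ne_zero.mpr hTF
  subst hsa hsb
  field_simp
  ring

theorem norm_mul_norm_sub_le_of_eq_div [NormedField K] (hTF : T ≠ F)
    (hsa : sa = T * (F - a) / (T - F)) (hsb : sb = T * (F - b) / (T - F)) :
    ‖T‖ * ‖a - b‖ ≤ (‖a‖ + ‖b‖ + ‖T‖) * (‖sa‖ + ‖sb‖) := by
  rw [norm_sub_rev, ← norm_mul, mul_sub_eq_of_eq_div hTF hsa hsb]
  calc ‖a * sb - b * sa + T * (sa - sb)‖
      ≤ ‖a * sb‖ + ‖b * sa‖ + ‖T‖ * (‖sa‖ + ‖sb‖) := by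
        grw [norm_add_le, norm_sub_le, norm_mul T, norm_sub_le]
    _ ≤ (‖a‖ + ‖b‖ + ‖T‖) * (‖sa‖ + ‖sb‖) := by
        simp only [norm_mul]
        nlinarith [norm_nonneg a, norm_nonneg b, norm_nonneg sa, norm_nonneg sb]

end MoebiusIdentity

theorem stmt16_general (f : ℂ → ℂ)
    (a b : ℂ) (hab : a ≠ b) (Q : ℝ) (hQ : 0 < Q) :
    ∃ η₀ : ℝ, 0 < η₀ ∧
      ∀ z : ℂ, Complex.cos z ≠ 0 → Complex.sin z ≠ 0 → f z ≠ 0 →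
        Lfun f z + Complex.tan z ≠ 0 →
        ‖sfun f a z‖ + ‖sfun f b z‖ ≤ η₀ →
        Q ≤ max ‖Complex.tan z‖ ‖Complex.cot z‖ := by
  have hab' : 0 < ‖a - b‖ := norm_pos_iff.mpr (sub_ne_zero.mpr hab)
  refine ⟨‖a - b‖ / (Q * (‖a‖ + ‖b‖ + Q)), by positivity, ?_⟩
  intro z hcos hsin _ hLT hs
  rcases le_or_gt Q ‖Complex.tan z‖ with hQT | hTQ
  · exact le_max_of_le_left hQT
  have hT : 0 < ‖Complex.tan z‖ := by
    rw [Complex.tan_eq_sin_div_cos]; exact norm_pos_iff.mpr (div_ne_zero hsin hcos)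
  have hbound : ‖Complex.tan z‖ * ‖a - b‖
      ≤ (‖a‖ + ‖b‖ + ‖Complex.tan z‖) * (‖sfun f a z‖ + ‖sfun f b z‖) :=
    norm_mul_norm_sub_le_of_eq_div (tan_ne_Ffun hcos hLT) rfl rfl
  have hT_le : ‖Complex.tan z‖ * ‖a - b‖ ≤ Q⁻¹ * ‖a - b‖ := calc
    _ ≤ (‖a‖ + ‖b‖ + Q) * (‖a - b‖ / (Q * (‖a‖ + ‖b‖ + Q))) := by
      grw [hbound, hs, hTQ]
    _ = Q⁻¹ * ‖a - b‖ := by field_simp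
  rw [Complex.norm_cot]
  exact le_max_of_le_right ((le_inv_comm₀ hQ hT).mpr (le_of_mul_le_mul_right hT_le hab'))

theorem stmt16 (f : ℂ → ℂ) (hre : RealEntire f) (htr : TranscendentalFun f)
    (a b : ℂ) (ha : a.im ≠ 0) (hb : b.im ≠ 0) (hab : a ≠ b) (Q : ℝ) (hQ : 0 < Q) :
    ∃ η₀ : ℝ, 0 < η₀ ∧
      ∀ z : ℂ, Complex.cos z ≠ 0 → Complex.sin z ≠ 0 → f z ≠ 0 →
        Lfun f z + Complex.tan z ≠ 0 →
        ‖sfun f a z‖ + ‖sfun f b z‖ ≤ η₀ →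
        Q ≤ max ‖Complex.tan z‖ ‖Complex.cot z‖ :=
  stmt16_general f a b hab Q hQ

end
end
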